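/- Let κ be a positive integer and U = [[a,b],[c,d]] ∈ SL(2,ℤ) with c ≠ 0, and define E_U : X × X → ℂ by E_U(λ,μ) = ((i·sign(c))^{|Δ₊|}/((κ|c|)^{l/2} vol(Y∨))) · exp(−(πi/h∨)Φ(U)|ρ|²) · exp((πi/κ)(d/c)|μ|²) · Σ_{ν ∈ Y∨/cY∨} exp((πi/κ)(a/c)|λ + κν|²) · Σ_{w ∈ W} det(w) exp(−(2πi/(κc))⟨λ + κν, w(μ)⟩). Then: (1) E_U(λ + κx, μ + κy) = E_U(λ,μ) for all x, y ∈ Y∨; (2) E_U(w(λ), w'(μ)) = det(w)·det(w')·E_U(λ,μ) for all w, w' ∈ W; and (3) E_U(λ,μ) = 0 whenever λ or μ lies in X ∩ H^κ, where H^κ = {x ∈ 𝔥ℝ* : ⟨x,α⟩ ∈ κℤ for some α ∈ Δ₊}. -/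

import Mathlib

open scoped BigOperators Classical
open Complex

noncomputable section

/-- The ambient Euclidean space `𝔥ℝ*`. -/
abbrev EucV (l : ℕ) := EuclideanSpace ℝ (Fin l)

/-- Reflection in the hyperplane orthogonal to a vector `α`. -/
def rootReflection {l : ℕ} (α : EucV l) : EucV l ≃ₗᵢ[ℝ] EucV l :=
  Submodule.reflection ((ℝ ∙ α)ᗮ)

/-- An abstract reduced irreducible crystallographic root system with a chosen base,
in Euclidean space, normalized so that the long roots have squared length `2`.
This is the standing data extracted from a finite-dimensional complex simple
Lie algebra `𝔤` of rank `l`. -/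
structure RootSystemData (l : ℕ) where
  /-- the set of roots -/
  Δ : Finset (EucV l)
  /-- the chosen base (simple roots) `Π = {α₁, …, α_l}` -/
  base : Fin l → EucV l
  zero_not_mem : (0 : EucV l) ∉ Δ
  span_eq_top : Submodule.span ℝ (Δ : Set (EucV l)) = ⊤
  neg_mem : ∀ α ∈ Δ, -α ∈ Δ
  reflect_mem : ∀ α ∈ Δ, ∀ β ∈ Δ, rootReflection α β ∈ Δ
  crystallographic : ∀ α ∈ Δ, ∀ β ∈ Δ, ∃ n : ℤ,
    2 * (inner ℝ α β : ℝ) = (n : ℝ) * (inner ℝ α α : ℝ)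
  reduced : ∀ α ∈ Δ, ∀ t : ℝ, t • α ∈ Δ → t = 1 ∨ t = -1
  base_mem : ∀ i, base i ∈ Δ
  base_indep : LinearIndependent ℝ base
  base_pos_or_neg : ∀ α ∈ Δ,
    (∃ c : Fin l → ℕ, α = ∑ i, (c i : ℝ) • base i) ∨
    (∃ c : Fin l → ℕ, α = -(∑ i, (c i : ℝ) • base i))
  normalized : ∀ α ∈ Δ, (inner ℝ α α : ℝ) ≤ 2
  exists_long : ∃ α ∈ Δ, (inner ℝ α α : ℝ) = 2
  irreducible : ∀ s : Set (Fin l), s.Nonempty →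
    (∀ i ∈ s, ∀ j ∉ s, (inner ℝ (base i) (base j) : ℝ) = 0) → s = Set.univ

namespace RootSystemData

variable {l : ℕ} (D : RootSystemData l)

/-- The coroot `α∨ = 2α/⟨α,α⟩` of a (nonzero) vector. -/
def coroot (α : EucV l) : EucV l := (2 / (inner ℝ α α : ℝ)) • α

/-- The set `Δ₊` of positive roots relative to the base. -/
def Δplus : Finset (EucV l) :=
  D.Δ.filter fun α => ∃ c : Fin l → ℕ, α = ∑ i, (c i : ℝ) • D.base i

/-- `ρ`, the half sum of the positive roots. -/
def rho : EucV l := (2 : ℝ)⁻¹ • ∑ α ∈ D.Δplus, α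

/-- The Weyl group `W`, generated by the reflections in the roots. -/
def weyl : Subgroup (EucV l ≃ₗᵢ[ℝ] EucV l) :=
  Subgroup.closure { w | ∃ α ∈ D.Δ, w = rootReflection α }

/-- The coroot lattice `Y∨`, the `ℤ`-span of the coroots. -/
def corootLattice : Submodule ℤ (EucV l) :=
  Submodule.span ℤ (coroot '' (D.Δ : Set (EucV l)))

/-- The weight lattice `X`, the dual lattice of the coroot lattice. -/
def weightLattice : Set (EucV l) :=
  { x | ∀ y ∈ D.corootLattice, ∃ n : ℤ, (inner ℝ x y : ℝ) = n }

/-- `T` is a (finite) set of representatives for the quotient `Y∨ / n·Y∨`. -/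
def IsCorootReps (n : ℤ) (T : Finset (EucV l)) : Prop :=
  (∀ t ∈ T, t ∈ D.corootLattice) ∧
    ∀ y ∈ D.corootLattice, ∃! t, t ∈ T ∧ ∃ u ∈ D.corootLattice, y - t = n • u

/-- The closed `κ`-alcove `C_κ` relative to the base and the highest root `θ`. -/
def Ck (θ : EucV l) (κ : ℕ) : Set (EucV l) :=
  { x | (∀ i, (0 : ℝ) ≤ inner ℝ x (D.base i)) ∧ (inner ℝ x θ : ℝ) ≤ κ }

/-- The interior `int(C_κ)` of the `κ`-alcove. -/
def intCk (θ : EucV l) (κ : ℕ) : Set (EucV l) :=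
  { x | (∀ i, (0 : ℝ) < inner ℝ x (D.base i)) ∧ (inner ℝ x θ : ℝ) < κ }

/-- `θ` is the highest root of the root system. -/
def IsHighestRoot (θ : EucV l) : Prop :=
  θ ∈ D.Δ ∧ ∀ α ∈ D.Δ, ∃ c : Fin l → ℕ, θ - α = ∑ i, (c i : ℝ) • D.base i

/-- The dual Coxeter number `h∨ = 1 + ⟨ρ, θ⟩` (as a real number), `θ` the highest root. -/
def hv (θ : EucV l) : ℝ := 1 + (inner ℝ D.rho θ : ℝ)

end RootSystemData

/-- The determinant `det w` of an orthogonal transformation of Euclidean space. -/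
def wdet {l : ℕ} (w : EucV l ≃ₗᵢ[ℝ] EucV l) : ℝ :=
  LinearMap.det (w.toLinearEquiv : EucV l →ₗ[ℝ] EucV l)

/-- The covolume of the lattice spanned by the `ℤ`-basis `b`,
computed via the Gram determinant. -/
def latVol {l : ℕ} (b : Fin l → EucV l) : ℝ :=
  Real.sqrt (Matrix.det (Matrix.of fun i j => (inner ℝ (b i) (b j) : ℝ)))

/-- The cotangent function. -/
def rcot (x : ℝ) : ℝ := Real.cos x / Real.sin x

/-- The Dedekind sum `s(d,c) = (1/(4|c|)) Σ_{j=1}^{|c|−1} cot(πj/c) cot(πdj/c)`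
(for `c ≠ 0`; note `s(d,±1) = 0` since the sum is empty). -/
def dedekindSum (d c : ℤ) : ℝ :=
  (1 / (4 * |(c : ℝ)|)) *
    ∑ j ∈ Finset.Icc 1 (c.natAbs - 1),
      rcot (Real.pi * j / c) * rcot (Real.pi * d * j / c)

/-- The Rademacher Phi function of a matrix `[[a,b],[c,d]]`. -/
def rademacherPhi (a b c d : ℤ) : ℝ :=
  if c = 0 then (b : ℝ) / d
  else ((a : ℝ) + d) / c - 12 * (Int.sign c : ℝ) * dedekindSum d c

/-- The Rademacher Phi function of an element of `SL(2,ℤ)`. -/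
def PhiSL (U : Matrix.SpecialLinearGroup (Fin 2) ℤ) : ℝ :=
  rademacherPhi (U.1 0 0) (U.1 0 1) (U.1 1 0) (U.1 1 1)

/-- The Dedekind symbol `S(a/b) = 12 sign(b) s(a,b)`. -/
def dedekindSymbol (a b : ℤ) : ℝ := 12 * (Int.sign b : ℝ) * dedekindSum a b

/-- The generator `Ξ = [[0,-1],[1,0]]` of `SL(2,ℤ)`. -/
def XiSL : Matrix.SpecialLinearGroup (Fin 2) ℤ :=
  ⟨!![0, -1; 1, 0], by norm_num [Matrix.det_fin_two_of]⟩

/-- The generator `Θ = [[1,1],[0,1]]` of `SL(2,ℤ)`. -/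
def ThSL : Matrix.SpecialLinearGroup (Fin 2) ℤ :=
  ⟨!![1, 1; 0, 1], by norm_num [Matrix.det_fin_two_of]⟩

namespace RootSystemData

variable {l : ℕ} (D : RootSystemData l)

/-- The index set `I = int(C_κ) ∩ X` of the `SL(2,ℤ)`-representation `ℛ`. -/
def Iset (θ : EucV l) (κ : ℕ) : Set (EucV l) := D.intCk θ κ ∩ D.weightLattice

/-- The entry `ℛ(Ξ)_{λμ}` of the representation:
`(i^{|Δ₊|}/κ^{l/2})·|vol(X)/vol(Y∨)|^{1/2}·Σ_{w∈W} det(w) exp(−(2πi/κ)⟨w(λ),μ⟩)`. -/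
def XiEntry (κ : ℕ) (volX volY : ℝ) (lam mu : EucV l) : ℂ :=
  Complex.I ^ D.Δplus.card / (((κ : ℝ) ^ ((l : ℝ) / 2) : ℝ) : ℂ) *
    ((Real.sqrt |volX / volY| : ℝ) : ℂ) *
    ∑ᶠ w ∈ (D.weyl : Set (EucV l ≃ₗᵢ[ℝ] EucV l)),
      ((wdet w : ℝ) : ℂ) *
        Complex.exp (-(2 * (Real.pi : ℂ) * Complex.I) / (κ : ℂ) *
          ((inner ℝ (w lam) mu : ℝ) : ℂ))

/-- The entry `ℛ(Θ)_{λμ} = δ_{λμ} exp((πi/κ)|λ|² − (πi/h∨)|ρ|²)` of the representation,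
`θ` being the highest root. -/
def ThEntry (θ : EucV l) (κ : ℕ) (lam mu : EucV l) : ℂ :=
  (if lam = mu then 1 else 0) *
    Complex.exp ((Real.pi : ℂ) * Complex.I / (κ : ℂ) * ((‖lam‖ ^ 2 : ℝ) : ℂ) -
      (Real.pi : ℂ) * Complex.I / ((D.hv θ : ℝ) : ℂ) * ((‖D.rho‖ ^ 2 : ℝ) : ℂ))

/-- `R` is (the family of matrix entries, indexed by `I × I`, of) the unitary
representation `ℛ = ℛ_κ^𝔤` of `SL(2,ℤ)`: it is multiplicative and takes the
prescribed values on the generators `Ξ` and `Θ`.  Here `θ` is the highest root and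
`volX`, `volY` are the covolumes of the weight and coroot lattices. -/
def IsRepR (θ : EucV l) (κ : ℕ) (volX volY : ℝ)
    (R : Matrix.SpecialLinearGroup (Fin 2) ℤ → EucV l → EucV l → ℂ) : Prop :=
  (∀ lam ∈ D.Iset θ κ, ∀ mu ∈ D.Iset θ κ,
      R 1 lam mu = if lam = mu then 1 else 0) ∧
    (∀ A B : Matrix.SpecialLinearGroup (Fin 2) ℤ,
      ∀ lam ∈ D.Iset θ κ, ∀ mu ∈ D.Iset θ κ,
        R (A * B) lam mu = ∑ᶠ nu ∈ D.Iset θ κ, R A lam nu * R B nu mu) ∧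
    (∀ lam ∈ D.Iset θ κ, ∀ mu ∈ D.Iset θ κ,
      R XiSL lam mu = D.XiEntry κ volX volY lam mu) ∧
    (∀ lam ∈ D.Iset θ κ, ∀ mu ∈ D.Iset θ κ,
      R ThSL lam mu = D.ThEntry θ κ lam mu)

end RootSystemData


/-! ### Auxiliary lemmas -/

section Aux

variable {l : ℕ}

lemma rootReflection_apply' {α : EucV l} (hα : α ≠ 0) (v : EucV l) :
    rootReflection α v = v - ((2 * (inner ℝ α v : ℝ) / (inner ℝ α α : ℝ)) • α) := by
  rw [rootReflection, Submodule.reflection_apply, Submodule.starProjection_orthogonal_val]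
  rw [two_smul]
  have h := Submodule.starProjection_singleton (𝕜 := ℝ) (v := α) v
  simp only [RCLike.ofReal_real_eq_id, id_eq] at h
  rw [h, real_inner_self_eq_norm_sq]
  have hc : (2 * (inner ℝ α v : ℝ) / (‖α‖^2 : ℝ)) = 2 * ((inner ℝ α v : ℝ) / (‖α‖^2:ℝ)) := by ring
  rw [hc]
  abel_nf
  module

lemma inner_self_ne_zero' {α : EucV l} (hα : α ≠ 0) : (inner ℝ α α : ℝ) ≠ 0 :=
  inner_self_ne_zero.mpr hα

lemma inner_self_pos' {α : EucV l} (hα : α ≠ 0) : (0:ℝ) < (inner ℝ α α : ℝ) :=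
  lt_of_le_of_ne real_inner_self_nonneg (Ne.symm (inner_self_ne_zero' hα))

lemma euc_inner_apply (x y : EucV l) : (inner ℝ x y : ℝ) = ∑ i, x i * y i := by
  simp [PiLp.inner_apply, RCLike.inner_apply, mul_comm]

lemma wdet_rootReflection {α : EucV l} (hα : α ≠ 0) :
    wdet (rootReflection α) = -1 := by
  classical
  set b := (EuclideanSpace.basisFun (Fin l) ℝ).toBasis with hb
  rw [wdet, ← LinearMap.det_toMatrix b]
  have hM : (LinearMap.toMatrix b b) (rootReflection α).toLinearEquiv =
      1 + Matrix.replicateCol Unit (fun i => -(2 * α i / (inner ℝ α α : ℝ))) *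
        Matrix.replicateRow Unit (fun j => α j) := by
    ext i j
    rw [LinearMap.toMatrix_apply]
    have hbj : b j = EuclideanSpace.single j 1 := by
      simp [hb, EuclideanSpace.basisFun_apply]
    simp only [LinearEquiv.coe_coe, LinearIsometryEquiv.coe_toLinearEquiv]
    rw [rootReflection_apply' hα (b j)]
    have hrepr : ∀ v : EucV l, b.repr v i = v i := by
      intro v; simp [hb]
    rw [map_sub, map_smul]
    have h1 : (inner ℝ α (b j) : ℝ) = α j := by
      rw [hbj, euc_inner_apply]
      simp [EuclideanSpace.single_apply]
    simp only [Finsupp.coe_sub, Finsupp.coe_smul, Pi.sub_apply, Pi.smul_apply, smul_eq_mul]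
    rw [hrepr, hrepr, h1]
    by_cases hij : i = j
    · subst hij
      simp [Matrix.one_apply, Matrix.replicateCol_apply, Matrix.replicateRow_apply, Matrix.mul_apply, hbj,
        EuclideanSpace.single_apply]
      ring
    · simp [Matrix.one_apply, Matrix.replicateCol_apply, Matrix.replicateRow_apply, Matrix.mul_apply, hij, hbj,
        EuclideanSpace.single_apply]
      ring
  rw [hM, Matrix.det_one_add_replicateCol_mul_replicateRow]
  have : (dotProduct (fun j => α j) (fun i => -(2 * α i / (inner ℝ α α : ℝ)))) = -2 := by
    have h2 := inner_self_ne_zero' hα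
    rw [dotProduct]
    have : ∑ i, α i * -(2 * α i / (inner ℝ α α : ℝ)) =
        -(2/(inner ℝ α α : ℝ)) * ∑ i, α i * α i := by
      rw [Finset.mul_sum]; congr 1; ext i; ring
    rw [this, ← euc_inner_apply]
    have hs : (∑ x : Fin l, α x * α x) ≠ 0 := by rw [← euc_inner_apply]; exact h2
    field_simp
  rw [this]; norm_num

lemma wdet_mul (g h : EucV l ≃ₗᵢ[ℝ] EucV l) : wdet (g * h) = wdet g * wdet h := by
  have : ((g * h).toLinearEquiv : EucV l →ₗ[ℝ] EucV l) =
      (g.toLinearEquiv : EucV l →ₗ[ℝ] EucV l).comp (h.toLinearEquiv : EucV l →ₗ[ℝ] EucV l) := by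
    ext v; rfl
  rw [wdet, this, LinearMap.det_comp]; rfl

lemma wdet_one : wdet (1 : EucV l ≃ₗᵢ[ℝ] EucV l) = 1 := by
  have : ((1 : EucV l ≃ₗᵢ[ℝ] EucV l).toLinearEquiv : EucV l →ₗ[ℝ] EucV l) = LinearMap.id := by
    ext v; rfl
  rw [wdet, this, LinearMap.det_id]

lemma rootReflection_inv (α : EucV l) : (rootReflection α)⁻¹ = rootReflection α := by
  have : (rootReflection α)⁻¹ = (rootReflection α).symm := rfl
  rw [this, rootReflection, Submodule.reflection_symm]

namespace RootSystemData

variable (D : RootSystemData l)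

lemma root_ne_zero {α : EucV l} (hα : α ∈ D.Δ) : α ≠ 0 := by
  intro h; exact D.zero_not_mem (h ▸ hα)

lemma weyl_wdet_pm {w : EucV l ≃ₗᵢ[ℝ] EucV l} (hw : w ∈ D.weyl) :
    wdet w = 1 ∨ wdet w = -1 := by
  induction hw using Subgroup.closure_induction with
  | mem g hg =>
      obtain ⟨α, hα, rfl⟩ := hg
      exact Or.inr (wdet_rootReflection (D.root_ne_zero hα))
  | one => exact Or.inl wdet_one
  | mul g h hg hh ihg ihh =>
      rw [wdet_mul]
      rcases ihg with h1 | h1 <;> rcases ihh with h2 | h2 <;> rw [h1, h2] <;> norm_num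
  | inv g hg ihg =>
      have hmul : wdet g⁻¹ * wdet g = 1 := by
        rw [← wdet_mul, inv_mul_cancel, wdet_one]
      rcases ihg with h1 | h1 <;> rw [h1] at hmul <;>
        [exact Or.inl (by linarith); exact Or.inr (by linarith)]

lemma weyl_wdet_sq {w : EucV l ≃ₗᵢ[ℝ] EucV l} (hw : w ∈ D.weyl) :
    wdet w * wdet w = 1 := by
  rcases D.weyl_wdet_pm hw with h | h <;> rw [h] <;> norm_num

lemma weyl_wdet_inv {w : EucV l ≃ₗᵢ[ℝ] EucV l} (hw : w ∈ D.weyl) :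
    wdet w⁻¹ = wdet w := by
  have hmul : wdet w⁻¹ * wdet w = 1 := by
    rw [← wdet_mul, inv_mul_cancel, wdet_one]
  rcases D.weyl_wdet_pm hw with h1 | h1 <;> rw [h1] at hmul ⊢ <;> linarith

lemma refl_maps_corootLattice {α : EucV l} (hα : α ∈ D.Δ) :
    ∀ v ∈ D.corootLattice, rootReflection α v ∈ D.corootLattice := by
  intro v hv
  induction hv using Submodule.span_induction with
  | mem x hx =>
      obtain ⟨β, hβ, rfl⟩ := hx
      have hβ0 := D.root_ne_zero hβ
      have hα0 := D.root_ne_zero hα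
      obtain ⟨n, hn⟩ := D.crystallographic β hβ α hα
      -- 2⟪β,α⟫ = n⟪β,β⟫
      have hββ := inner_self_ne_zero' hβ0
      have hαα := inner_self_ne_zero' hα0
      have key : rootReflection α (coroot β) = coroot β - (n : ℤ) • coroot α := by
        rw [rootReflection_apply' hα0]
        rw [coroot, coroot]
        have hinner : (inner ℝ α ((2 / (inner ℝ β β : ℝ)) • β) : ℝ)
            = (2 / (inner ℝ β β : ℝ)) * (inner ℝ α β : ℝ) := by
          rw [real_inner_smul_right]
        have h4 : 2 * (inner ℝ α β : ℝ) = (n:ℝ) * (inner ℝ β β : ℝ) := by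
          rw [← real_inner_comm α β]; exact hn
        have hcoef : 2 * ((2 / (inner ℝ β β : ℝ)) * (inner ℝ α β : ℝ)) / (inner ℝ α α : ℝ)
            = (n:ℝ) * (2 / (inner ℝ α α : ℝ)) := by
          calc 2 * ((2 / (inner ℝ β β : ℝ)) * (inner ℝ α β : ℝ)) / (inner ℝ α α : ℝ)
              = (2 * (inner ℝ α β : ℝ)) * 2 / ((inner ℝ β β : ℝ) * (inner ℝ α α : ℝ)) := by ring
            _ = ((n:ℝ) * (inner ℝ β β : ℝ)) * 2 / ((inner ℝ β β : ℝ) * (inner ℝ α α : ℝ)) := by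
                rw [h4]
            _ = (n:ℝ) * (2 / (inner ℝ α α : ℝ)) := by
                rw [show ((n:ℝ) * (inner ℝ β β : ℝ)) * 2 / ((inner ℝ β β : ℝ) * (inner ℝ α α : ℝ))
                  = (n:ℝ) * (2 / (inner ℝ α α : ℝ)) * ((inner ℝ β β : ℝ)/(inner ℝ β β : ℝ)) by ring,
                  div_self hββ, mul_one]
        rw [hinner, hcoef, mul_smul, Int.cast_smul_eq_zsmul]
      rw [key]
      exact Submodule.sub_mem _
        (Submodule.subset_span ⟨β, hβ, rfl⟩)
        (Submodule.smul_mem _ n (Submodule.subset_span ⟨α, hα, rfl⟩))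
  | zero => simpa using Submodule.zero_mem _
  | add x y hx hy ihx ihy => rw [map_add]; exact Submodule.add_mem _ ihx ihy
  | smul a x hx ihx =>
      rw [map_zsmul]; exact Submodule.smul_mem _ a ihx

lemma weyl_maps_corootLattice' {w : EucV l ≃ₗᵢ[ℝ] EucV l} (hw : w ∈ D.weyl) :
    (∀ v ∈ D.corootLattice, w v ∈ D.corootLattice) ∧
      (∀ v ∈ D.corootLattice, w⁻¹ v ∈ D.corootLattice) := by
  induction hw using Subgroup.closure_induction with
  | mem g hg =>
      obtain ⟨α, hα, rfl⟩ := hg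
      refine ⟨D.refl_maps_corootLattice hα, ?_⟩
      rw [rootReflection_inv]
      exact D.refl_maps_corootLattice hα
  | one => exact ⟨fun v hv => hv, fun v hv => by simpa using hv⟩
  | mul g h hg hh ihg ihh =>
      refine ⟨fun v hv => ihg.1 _ (ihh.1 _ hv), fun v hv => ?_⟩
      have : (g * h)⁻¹ = h⁻¹ * g⁻¹ := by group
      rw [this]
      exact ihh.2 _ (ihg.2 _ hv)
  | inv g hg ihg =>
      refine ⟨ihg.2, fun v hv => by simpa using ihg.1 v hv⟩

lemma weyl_maps_corootLattice {w : EucV l ≃ₗᵢ[ℝ] EucV l} (hw : w ∈ D.weyl)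
    {v : EucV l} (hv : v ∈ D.corootLattice) : w v ∈ D.corootLattice :=
  (D.weyl_maps_corootLattice' hw).1 v hv

lemma weyl_maps_weight {w : EucV l ≃ₗᵢ[ℝ] EucV l} (hw : w ∈ D.weyl)
    {x : EucV l} (hx : x ∈ D.weightLattice) : w x ∈ D.weightLattice := by
  intro y hy
  have hy' : w⁻¹ y ∈ D.corootLattice := (D.weyl_maps_corootLattice' hw).2 y hy
  obtain ⟨n, hn⟩ := hx _ hy'
  refine ⟨n, ?_⟩
  have : (inner ℝ (w x) y : ℝ) = (inner ℝ (w x) (w (w⁻¹ y)) : ℝ) := by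
    congr 1
    exact (w.apply_symm_apply y).symm
  rw [this, LinearIsometryEquiv.inner_map_map, hn]

end RootSystemData

end Aux


namespace RootSystemData

variable {l : ℕ} (D : RootSystemData l)

lemma span_base_top : Submodule.span ℝ (Set.range D.base) = ⊤ := by
  refine le_antisymm le_top ?_
  rw [← D.span_eq_top]
  refine Submodule.span_le.2 ?_
  intro α hα
  have hmem : ∀ c : Fin l → ℕ, (∑ i, (c i : ℝ) • D.base i) ∈
      Submodule.span ℝ (Set.range D.base) := by
    intro c
    exact Submodule.sum_mem _ fun i _ =>
      Submodule.smul_mem _ _ (Submodule.subset_span ⟨i, rfl⟩)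
  rcases D.base_pos_or_neg α hα with ⟨c, hc⟩ | ⟨c, hc⟩
  · rw [hc]; exact hmem c
  · rw [hc]; exact Submodule.neg_mem _ (hmem c)

/-- The set of long roots. -/
def longSet : Set (EucV l) := {β : EucV l | β ∈ D.Δ ∧ (inner ℝ β β : ℝ) = 2}

lemma refl_maps_long {α β : EucV l} (hα : α ∈ D.Δ) (hβ : β ∈ D.longSet) :
    rootReflection α β ∈ D.longSet := by
  refine ⟨D.reflect_mem α hα β hβ.1, ?_⟩
  rw [show ((rootReflection α) β) = (rootReflection α) β from rfl,
    LinearIsometryEquiv.inner_map_map]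
  exact hβ.2

lemma orth_longSpan {α : EucV l} (h : ∀ γ ∈ D.longSet, (inner ℝ α γ : ℝ) = 0) :
    ∀ v ∈ Submodule.span ℝ D.longSet, (inner ℝ α v : ℝ) = 0 := by
  intro v hv
  induction hv using Submodule.span_induction with
  | mem x hx => exact h x hx
  | zero => simp
  | add x y hx hy ihx ihy => rw [inner_add_right, ihx, ihy]; norm_num
  | smul a x hx ihx => rw [real_inner_smul_right, ihx]; ring

lemma mem_longSpan_of_not_orth {α : EucV l} (hα : α ∈ D.Δ)
    (h : ∃ γ ∈ D.longSet, (inner ℝ α γ : ℝ) ≠ 0) :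
    α ∈ Submodule.span ℝ D.longSet := by
  obtain ⟨γ, hγ, hne⟩ := h
  have hα0 := D.root_ne_zero hα
  set c : ℝ := 2 * (inner ℝ α γ : ℝ) / (inner ℝ α α : ℝ) with hc
  have hc0 : c ≠ 0 := by
    have := inner_self_ne_zero' hα0
    simp only [hc, div_ne_zero_iff]
    constructor
    · intro h'
      apply hne
      linarith [h']
    · exact this
  have hrefl : rootReflection α γ = γ - c • α := rootReflection_apply' hα0 γ
  have hsub : c • α = γ - rootReflection α γ := by rw [hrefl]; abel
  have hmem : γ - rootReflection α γ ∈ Submodule.span ℝ D.longSet :=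
    Submodule.sub_mem _ (Submodule.subset_span hγ)
      (Submodule.subset_span (D.refl_maps_long hα hγ))
  have : α = c⁻¹ • (c • α) := by rw [smul_smul, inv_mul_cancel₀ hc0, one_smul]
  rw [this, hsub]
  exact Submodule.smul_mem _ _ hmem

lemma longSpan_top : Submodule.span ℝ D.longSet = ⊤ := by
  classical
  set V : Submodule ℝ (EucV l) := Submodule.span ℝ D.longSet with hV
  set s : Set (Fin l) := {i | D.base i ∈ V} with hs
  obtain ⟨γ, hγΔ, hγ2⟩ := D.exists_long
  have hγL : γ ∈ D.longSet := ⟨hγΔ, hγ2⟩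
  have hγV : γ ∈ V := Submodule.subset_span hγL
  have hγ0 : γ ≠ 0 := D.root_ne_zero hγΔ
  have horthbase : ∀ j, j ∉ s → ∀ v ∈ V, (inner ℝ (D.base j) v : ℝ) = 0 := by
    intro j hj v hv
    refine D.orth_longSpan ?_ v hv
    intro δ hδ
    by_contra hne
    exact hj (D.mem_longSpan_of_not_orth (D.base_mem j) ⟨δ, hδ, hne⟩)
  have hsne : s.Nonempty := by
    by_contra hemp
    have hemp : s = ∅ := Set.not_nonempty_iff_eq_empty.mp hemp
    have hbase0 : ∀ j, ∀ v ∈ V, (inner ℝ (D.base j) v : ℝ) = 0 := by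
      intro j
      exact horthbase j (by rw [hemp]; exact Set.notMem_empty j)
    have hγγ : (inner ℝ γ γ : ℝ) = 0 := by
      have hmem : γ ∈ Submodule.span ℝ (Set.range D.base) := by
        rw [D.span_base_top]; trivial
      have : ∀ x ∈ Submodule.span ℝ (Set.range D.base), (inner ℝ x γ : ℝ) = 0 := by
        intro x hx
        induction hx using Submodule.span_induction with
        | mem x hx => obtain ⟨j, rfl⟩ := hx; exact hbase0 j γ hγV
        | zero => simp
        | add x y hx hy ihx ihy => rw [inner_add_left, ihx, ihy]; norm_num
        | smul a x hx ihx => rw [real_inner_smul_left, ihx]; ring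
      exact this γ hmem
    rw [hγ2] at hγγ; norm_num at hγγ
  have hsu : s = Set.univ := by
    refine D.irreducible s hsne ?_
    intro i hi j hj
    have := horthbase j hj (D.base i) hi
    rw [real_inner_comm]
    exact this
  refine le_antisymm le_top ?_
  rw [← D.span_base_top]
  refine Submodule.span_le.2 ?_
  intro x hx
  obtain ⟨i, rfl⟩ := hx
  have : i ∈ s := by rw [hsu]; trivial
  exact this

lemma exists_long_pair {β : EucV l} (hβ : β ∈ D.Δ) :
    ∃ γ, γ ∈ D.Δ ∧ (inner ℝ γ γ : ℝ) = 2 ∧ (inner ℝ β γ : ℝ) ≠ 0 := by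
  by_contra h
  push_neg at h
  have horth : ∀ γ ∈ D.longSet, (inner ℝ β γ : ℝ) = 0 := by
    intro γ hγ
    by_contra hne
    exact hne (h γ hγ.1 hγ.2)
  have := D.orth_longSpan horth β (by rw [D.longSpan_top]; trivial)
  exact inner_self_ne_zero' (D.root_ne_zero hβ) this

/-- KEY: `2/⟨β,β⟩` is a (positive) integer for every root `β`. -/
lemma two_eq_int_mul_inner {β : EucV l} (hβ : β ∈ D.Δ) :
    ∃ r : ℤ, (2 : ℝ) = (r : ℝ) * (inner ℝ β β : ℝ) := by
  obtain ⟨γ, hγΔ, hγ2, hne⟩ := D.exists_long_pair hβ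
  obtain ⟨n, hn⟩ := D.crystallographic γ hγΔ β hβ
  obtain ⟨m, hm⟩ := D.crystallographic β hβ γ hγΔ
  -- hn : 2⟪γ,β⟫ = n⟪γ,γ⟫ = 2n,  hm : 2⟪β,γ⟫ = m⟪β,β⟫
  have hγβ : (inner ℝ γ β : ℝ) = (n : ℝ) := by
    rw [hγ2] at hn; linarith
  have hβγ : (inner ℝ β γ : ℝ) = (n : ℝ) := by
    rw [← real_inner_comm γ β] at hγβ
    exact hγβ
  have h2n : 2 * (n : ℝ) = (m : ℝ) * (inner ℝ β β : ℝ) := by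
    rw [← hβγ]; exact hm
  have hn0 : n ≠ 0 := by
    intro h0
    rw [h0] at hβγ
    exact hne (by simpa using hβγ)
  set B : ℝ := (inner ℝ β β : ℝ) with hB
  have hCS : (n : ℝ) * (n : ℝ) ≤ B * 2 := by
    have := real_inner_mul_inner_self_le β γ
    rw [hβγ, hγ2] at this
    exact this
  have hBle : B ≤ 2 := D.normalized β hβ
  by_cases h1 : n = 1 ∨ n = -1
  · refine ⟨m * n, ?_⟩
    have hn2 : (n : ℝ) ^ 2 = 1 := by rcases h1 with rfl | rfl <;> norm_num
    push_cast
    linear_combination (n : ℝ) * h2n - 2 * hn2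
  · push_neg at h1
    have h2le : n ≤ -2 ∨ 2 ≤ n := by omega
    have h4le : (4 : ℝ) ≤ (n : ℝ) * (n : ℝ) := by
      rcases h2le with h | h
      · have : (n:ℝ) ≤ -2 := by exact_mod_cast h
        nlinarith
      · have : (2:ℝ) ≤ (n:ℝ) := by exact_mod_cast h
        nlinarith
    have hB2 : B = 2 := by linarith
    exact ⟨1, by rw [hB2]; norm_num⟩

lemma coroot_inner_int {α β : EucV l} (hα : α ∈ D.Δ) (hβ : β ∈ D.Δ) :
    ∃ z : ℤ, (inner ℝ (coroot α) (coroot β) : ℝ) = (z : ℝ) := by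
  obtain ⟨m, hm⟩ := D.crystallographic α hα β hβ
  obtain ⟨r, hr⟩ := D.two_eq_int_mul_inner hβ
  have hA := inner_self_ne_zero' (D.root_ne_zero hα)
  have hB := inner_self_ne_zero' (D.root_ne_zero hβ)
  refine ⟨m * r, ?_⟩
  set A : ℝ := (inner ℝ α α : ℝ)
  set B : ℝ := (inner ℝ β β : ℝ)
  set X : ℝ := (inner ℝ α β : ℝ)
  have hco : (inner ℝ (coroot α) (coroot β) : ℝ) = (2 / A) * ((2 / B) * X) := by
    rw [coroot, coroot, real_inner_smul_left, real_inner_smul_right]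
  rw [hco]
  have h2B : (2 : ℝ) / B = (r : ℝ) := by
    rw [hr, mul_div_assoc, div_self hB, mul_one]
  calc (2 / A) * ((2 / B) * X) = (2 * X) / A * (2 / B) := by ring
    _ = ((m:ℝ) * A) / A * (2 / B) := by rw [hm]
    _ = (m:ℝ) * (2 / B) := by rw [mul_div_assoc, div_self hA, mul_one]
    _ = ((m * r : ℤ) : ℝ) := by rw [h2B]; push_cast; ring

lemma coroot_inner_self_even {α : EucV l} (hα : α ∈ D.Δ) :
    ∃ z : ℤ, (inner ℝ (coroot α) (coroot α) : ℝ) = 2 * (z : ℝ) := by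
  obtain ⟨r, hr⟩ := D.two_eq_int_mul_inner hα
  have hA := inner_self_ne_zero' (D.root_ne_zero hα)
  refine ⟨r, ?_⟩
  set A : ℝ := (inner ℝ α α : ℝ)
  have hco : (inner ℝ (coroot α) (coroot α) : ℝ) = (2 / A) * ((2 / A) * A) := by
    rw [coroot, real_inner_smul_left, real_inner_smul_right]
  have h2A : (2 : ℝ) / A = (r : ℝ) := by
    rw [hr, mul_div_assoc, div_self hA, mul_one]
  rw [hco]
  calc (2 / A) * ((2 / A) * A) = (2 / A) * (2 * (A / A)) := by ring
    _ = (2 / A) * 2 := by rw [div_self hA, mul_one]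
    _ = 2 * (r : ℝ) := by rw [h2A]; ring

lemma lat_inner_int {u v : EucV l} (hu : u ∈ D.corootLattice) (hv : v ∈ D.corootLattice) :
    ∃ n : ℤ, (inner ℝ u v : ℝ) = (n : ℝ) := by
  induction hu using Submodule.span_induction with
  | mem x hx =>
      obtain ⟨α, hα, rfl⟩ := hx
      induction hv using Submodule.span_induction with
      | mem y hy =>
          obtain ⟨β, hβ, rfl⟩ := hy
          exact D.coroot_inner_int hα hβ
      | zero => exact ⟨0, by simp⟩
      | add y z hy hz ihy ihz =>
          obtain ⟨n1, h1⟩ := ihy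
          obtain ⟨n2, h2⟩ := ihz
          exact ⟨n1 + n2, by rw [inner_add_right, h1, h2]; push_cast; ring⟩
      | smul a y hy ihy =>
          obtain ⟨n1, h1⟩ := ihy
          refine ⟨a * n1, ?_⟩
          rw [← Int.cast_smul_eq_zsmul ℝ, real_inner_smul_right, h1]
          push_cast; ring
  | zero => exact ⟨0, by simp⟩
  | add x y hx hy ihx ihy =>
      obtain ⟨n1, h1⟩ := ihx
      obtain ⟨n2, h2⟩ := ihy
      exact ⟨n1 + n2, by rw [inner_add_left, h1, h2]; push_cast; ring⟩
  | smul a x hx ihx =>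
      obtain ⟨n1, h1⟩ := ihx
      refine ⟨a * n1, ?_⟩
      rw [← Int.cast_smul_eq_zsmul ℝ, real_inner_smul_left, h1]
      push_cast; ring

lemma lat_inner_self_even {u : EucV l} (hu : u ∈ D.corootLattice) :
    ∃ n : ℤ, (inner ℝ u u : ℝ) = 2 * (n : ℝ) := by
  induction hu using Submodule.span_induction with
  | mem x hx =>
      obtain ⟨α, hα, rfl⟩ := hx
      exact D.coroot_inner_self_even hα
  | zero => exact ⟨0, by simp⟩
  | add x y hx hy ihx ihy =>
      obtain ⟨n1, h1⟩ := ihx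
      obtain ⟨n2, h2⟩ := ihy
      obtain ⟨n3, h3⟩ := D.lat_inner_int hx hy
      refine ⟨n1 + n3 + n2, ?_⟩
      rw [real_inner_add_add_self, h1, h2, h3]
      push_cast; ring
  | smul a x hx ihx =>
      obtain ⟨n1, h1⟩ := ihx
      refine ⟨a * a * n1, ?_⟩
      rw [← Int.cast_smul_eq_zsmul ℝ, real_inner_smul_left, real_inner_smul_right, h1]
      push_cast; ring

lemma weight_pair_int {x v : EucV l} (hx : x ∈ D.weightLattice)
    (hv : v ∈ D.corootLattice) : ∃ n : ℤ, (inner ℝ x v : ℝ) = (n : ℝ) :=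
  hx v hv

end RootSystemData


namespace RootSystemData

variable {l : ℕ} (D : RootSystemData l)

lemma weyl_maps_root' {w : EucV l ≃ₗᵢ[ℝ] EucV l} (hw : w ∈ D.weyl) :
    (∀ α ∈ D.Δ, w α ∈ D.Δ) ∧ (∀ α ∈ D.Δ, w⁻¹ α ∈ D.Δ) := by
  induction hw using Subgroup.closure_induction with
  | mem g hg =>
      obtain ⟨α, hα, rfl⟩ := hg
      refine ⟨fun β hβ => D.reflect_mem α hα β hβ, ?_⟩
      rw [rootReflection_inv]
      exact fun β hβ => D.reflect_mem α hα β hβ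
  | one => exact ⟨fun α hα => hα, fun α hα => by simpa using hα⟩
  | mul g h hg hh ihg ihh =>
      refine ⟨fun α hα => ihg.1 _ (ihh.1 _ hα), fun α hα => ?_⟩
      have : (g * h)⁻¹ = h⁻¹ * g⁻¹ := by group
      rw [this]
      exact ihh.2 _ (ihg.2 _ hα)
  | inv g hg ihg => exact ⟨ihg.2, fun α hα => by simpa using ihg.1 α hα⟩

lemma weyl_finite : (D.weyl : Set (EucV l ≃ₗᵢ[ℝ] EucV l)).Finite := by
  classical
  have hfin : Finite {w : EucV l ≃ₗᵢ[ℝ] EucV l // w ∈ D.weyl} := by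
    refine Finite.of_injective
      (fun (w : {w : EucV l ≃ₗᵢ[ℝ] EucV l // w ∈ D.weyl}) =>
        (fun α : {x // x ∈ D.Δ} =>
          (⟨w.1 α.1, (D.weyl_maps_root' w.2).1 α.1 α.2⟩ : {x // x ∈ D.Δ}))) ?_
    intro w1 w2 h
    have hΔ : ∀ α ∈ D.Δ, w1.1 α = w2.1 α := by
      intro α hα
      exact congrArg Subtype.val (congrFun h ⟨α, hα⟩)
    have hall : ∀ v : EucV l, w1.1 v = w2.1 v := by
      intro v
      have hv : v ∈ Submodule.span ℝ (D.Δ : Set (EucV l)) := by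
        rw [D.span_eq_top]; trivial
      induction hv using Submodule.span_induction with
      | mem x hx => exact hΔ x hx
      | zero => simp
      | add x y hx hy ihx ihy => rw [map_add, map_add, ihx, ihy]
      | smul a x hx ihx => rw [map_smul, map_smul, ihx]
    exact Subtype.ext (LinearIsometryEquiv.ext hall)
  haveI := hfin
  exact Set.toFinite _

lemma sum_reps_reindex {n : ℤ} {T : Finset (EucV l)} (hT : D.IsCorootReps n T)
    (φ ψ : EucV l → EucV l)
    (hφY : ∀ v ∈ D.corootLattice, φ v ∈ D.corootLattice)
    (hψY : ∀ v ∈ D.corootLattice, ψ v ∈ D.corootLattice)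
    (hψφ : ∀ v ∈ D.corootLattice, ∃ u ∈ D.corootLattice, ψ (φ v) - v = n • u)
    (hφψ : ∀ v ∈ D.corootLattice, ∃ u ∈ D.corootLattice, φ (ψ v) - v = n • u)
    (hφc : ∀ v₁ ∈ D.corootLattice, ∀ v₂ ∈ D.corootLattice,
      (∃ u ∈ D.corootLattice, v₁ - v₂ = n • u) →
        ∃ u ∈ D.corootLattice, φ v₁ - φ v₂ = n • u)
    (hψc : ∀ v₁ ∈ D.corootLattice, ∀ v₂ ∈ D.corootLattice,
      (∃ u ∈ D.corootLattice, v₁ - v₂ = n • u) →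
        ∃ u ∈ D.corootLattice, ψ v₁ - ψ v₂ = n • u)
    (g : EucV l → ℂ)
    (hg : ∀ v₁ ∈ D.corootLattice, ∀ v₂ ∈ D.corootLattice,
      (∃ u ∈ D.corootLattice, v₁ - v₂ = n • u) → g v₁ = g v₂) :
    ∑ ν ∈ T, g (φ ν) = ∑ ν ∈ T, g ν := by
  classical
  have hTY : ∀ t ∈ T, t ∈ D.corootLattice := hT.1
  have hex : ∀ y, y ∈ D.corootLattice →
      ∃ t, (t ∈ T ∧ ∃ u ∈ D.corootLattice, y - t = n • u) := fun y hy => (hT.2 y hy).exists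
  choose! rep hrep1 hrep2 using hex
  have huniq : ∀ y, y ∈ D.corootLattice → ∀ t, (t ∈ T ∧ ∃ u ∈ D.corootLattice, y - t = n • u) →
      t = rep y := by
    intro y hy t ht
    exact (hT.2 y hy).unique ht ⟨hrep1 y hy, hrep2 y hy⟩
  -- generic: the map t ↦ rep (χ t) is the two-sided inverse
  have hinv : ∀ (χ ω : EucV l → EucV l),
      (∀ v ∈ D.corootLattice, χ v ∈ D.corootLattice) →
      (∀ v ∈ D.corootLattice, ω v ∈ D.corootLattice) →
      (∀ v ∈ D.corootLattice, ∃ u ∈ D.corootLattice, ω (χ v) - v = n • u) →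
      (∀ v₁ ∈ D.corootLattice, ∀ v₂ ∈ D.corootLattice,
        (∃ u ∈ D.corootLattice, v₁ - v₂ = n • u) →
          ∃ u ∈ D.corootLattice, ω v₁ - ω v₂ = n • u) →
      ∀ t ∈ T, rep (ω (rep (χ t))) = t := by
    intro χ ω hχY hωY hωχ hωc t ht
    have htY : t ∈ D.corootLattice := hTY t ht
    have hχtY : χ t ∈ D.corootLattice := hχY t htY
    have hrY : rep (χ t) ∈ D.corootLattice := hTY _ (hrep1 _ hχtY)
    obtain ⟨u₁, hu₁, e₁⟩ := hrep2 _ hχtY  -- χ t - rep (χ t) = n u₁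
    obtain ⟨u₂, hu₂, e₂⟩ := hωχ t htY    -- ω (χ t) - t = n u₂
    obtain ⟨u₃, hu₃, e₃⟩ := hωc (χ t) hχtY (rep (χ t)) hrY ⟨u₁, hu₁, e₁⟩
    -- ω (χ t) - ω (rep (χ t)) = n u₃
    have hkey : ω (rep (χ t)) - t = n • (u₂ - u₃) := by
      rw [smul_sub, ← e₂, ← e₃]; abel
    exact (huniq (ω (rep (χ t))) (hωY _ hrY) t
      ⟨ht, u₂ - u₃, Submodule.sub_mem _ hu₂ hu₃, hkey⟩).symm
  refine Finset.sum_nbij' (fun t => rep (φ t)) (fun t => rep (ψ t)) ?_ ?_ ?_ ?_ ?_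
  · intro t ht; exact hrep1 _ (hφY t (hTY t ht))
  · intro t ht; exact hrep1 _ (hψY t (hTY t ht))
  · intro t ht; exact hinv φ ψ hφY hψY hψφ hψc t ht
  · intro t ht; exact hinv ψ φ hψY hφY hφψ hφc t ht
  · intro t ht
    have htY := hTY t ht
    have hφtY := hφY t htY
    obtain ⟨u₁, hu₁, e₁⟩ := hrep2 _ hφtY
    exact hg (φ t) hφtY (rep (φ t)) (hTY _ (hrep1 _ hφtY)) ⟨u₁, hu₁, e₁⟩

end RootSystemData

/-- The basic phase factor appearing in `E_U`. -/
def Qph {l : ℕ} (a d c : ℤ) (κ : ℕ) (lam mu ν : EucV l)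
    (w : EucV l ≃ₗᵢ[ℝ] EucV l) : ℂ :=
  Complex.exp ((Real.pi : ℂ) * Complex.I / ((κ : ℂ) * (c : ℂ)) *
    (((a : ℝ) * ‖lam + (κ:ℝ) • ν‖^2 + (d : ℝ) * ‖mu‖^2
      - 2 * (inner ℝ (lam + (κ:ℝ) • ν) (w mu) : ℝ) : ℝ) : ℂ))

namespace RootSystemData

variable {l : ℕ} (D : RootSystemData l)

lemma core_phase {κ : ℕ} (hκ : 0 < κ) {a b c d : ℤ} (hc : c ≠ 0)
    (hdet : a * d - b * c = 1)
    {w : EucV l ≃ₗᵢ[ℝ] EucV l} (hw : w ∈ D.weyl)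
    {lam mu x y ν u : EucV l}
    (hlam : lam ∈ D.weightLattice) (hmu : mu ∈ D.weightLattice)
    (hx : x ∈ D.corootLattice) (hy : y ∈ D.corootLattice)
    (hν : ν ∈ D.corootLattice) (hu : u ∈ D.corootLattice) :
    Qph a d c κ (lam + (κ:ℝ) • x) (mu + (κ:ℝ) • y) ν w
      = Qph a d c κ lam mu (ν + x - d • (w y) + c • u) w := by
  have hwy : w y ∈ D.corootLattice := D.weyl_maps_corootLattice hw hy
  have hwiu : w.symm u ∈ D.corootLattice := (D.weyl_maps_corootLattice' hw).2 u hu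
  obtain ⟨n1, e1⟩ := D.weight_pair_int hlam hwy
  obtain ⟨n2, e2⟩ := D.lat_inner_int hν hwy
  obtain ⟨n3, e3⟩ := D.weight_pair_int hlam hu
  obtain ⟨n4, e4⟩ := D.lat_inner_int hν hu
  obtain ⟨n5, e5'⟩ := D.weight_pair_int hmu hwiu
  have e5 : (inner ℝ u (w mu) : ℝ) = (n5 : ℝ) := by
    have h1 : (inner ℝ u (w mu) : ℝ) = (inner ℝ (w.symm u) mu : ℝ) := by
      conv_lhs => rw [← w.apply_symm_apply u]
      rw [LinearIsometryEquiv.inner_map_map]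
    rw [h1, real_inner_comm]
    exact e5'
  obtain ⟨n6, e6⟩ := D.lat_inner_int hx hwy
  obtain ⟨n7, e7⟩ := D.lat_inner_int hwy hu
  obtain ⟨n8, e8⟩ := D.lat_inner_int hx hu
  obtain ⟨p, e9⟩ := D.lat_inner_self_even hy
  obtain ⟨q, e10⟩ := D.lat_inner_self_even hu
  -- symmetric versions
  have e1s : (inner ℝ (w y) lam : ℝ) = (n1 : ℝ) := by rw [real_inner_comm]; exact e1
  have e2s : (inner ℝ (w y) ν : ℝ) = (n2 : ℝ) := by rw [real_inner_comm]; exact e2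
  have e3s : (inner ℝ u lam : ℝ) = (n3 : ℝ) := by rw [real_inner_comm]; exact e3
  have e4s : (inner ℝ u ν : ℝ) = (n4 : ℝ) := by rw [real_inner_comm]; exact e4
  have e6s : (inner ℝ (w y) x : ℝ) = (n6 : ℝ) := by rw [real_inner_comm]; exact e6
  have e7s : (inner ℝ u (w y) : ℝ) = (n7 : ℝ) := by rw [real_inner_comm]; exact e7
  have e8s : (inner ℝ u x : ℝ) = (n8 : ℝ) := by rw [real_inner_comm]; exact e8
  have f1 : (inner ℝ (w y) (w y) : ℝ) = 2 * (p : ℝ) := by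
    rw [LinearIsometryEquiv.inner_map_map]; exact e9
  have f2 : (inner ℝ (w y) (w mu) : ℝ) = (inner ℝ mu y : ℝ) := by
    rw [LinearIsometryEquiv.inner_map_map, real_inner_comm]
  have f3 : (inner ℝ y mu : ℝ) = (inner ℝ mu y : ℝ) := by rw [real_inner_comm]
  have hdetR : (a:ℝ) * (d:ℝ) - (b:ℝ) * (c:ℝ) = 1 := by exact_mod_cast hdet
  set N : ℤ := b*n1 + κ*b*n2 - a*n3 - κ*a*n4 + n5 + κ*b*n6 + κ*a*d*n7 - κ*a*n8
    - κ*b*d*p - κ*a*c*q with hN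
  have key : ((a : ℝ) * ‖(lam + (κ:ℝ) • x) + (κ:ℝ) • ν‖^2
        + (d : ℝ) * ‖mu + (κ:ℝ) • y‖^2
        - 2 * (inner ℝ ((lam + (κ:ℝ) • x) + (κ:ℝ) • ν) (w (mu + (κ:ℝ) • y)) : ℝ))
      = ((a : ℝ) * ‖lam + (κ:ℝ) • (ν + x - d • (w y) + c • u)‖^2
        + (d : ℝ) * ‖mu‖^2
        - 2 * (inner ℝ (lam + (κ:ℝ) • (ν + x - d • (w y) + c • u)) (w mu) : ℝ))
        + (κ:ℝ) * (c:ℝ) * (2 * (N:ℝ)) := by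
    simp only [← Int.cast_smul_eq_zsmul ℝ]
    simp only [← real_inner_self_eq_norm_sq, map_add, LinearIsometryEquiv.map_smul,
      inner_add_left, inner_add_right, inner_sub_left, inner_sub_right,
      real_inner_smul_left, real_inner_smul_right]
    simp only [e1, e1s, e2, e2s, e3, e3s, e4, e4s, e5, e6, e6s, e7, e7s, e8, e8s,
      e9, e10, f1, f2, f3]
    rw [hN]
    push_cast
    linear_combination (2*(κ:ℝ)*(n1:ℝ) + 2*(κ:ℝ)^2*(n2:ℝ) + 2*(κ:ℝ)^2*(n6:ℝ)
      - 2*(κ:ℝ)^2*(d:ℝ)*(p:ℝ)) * hdetR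
  have hκC : (κ : ℂ) ≠ 0 := by
    exact_mod_cast Nat.cast_ne_zero.mpr hκ.ne'
  have hcC : (c : ℂ) ≠ 0 := by exact_mod_cast hc
  rw [Qph, Qph]
  rw [key]
  push_cast
  rw [show ((Real.pi : ℂ) * Complex.I / ((κ : ℂ) * (c : ℂ)) *
      (((a : ℂ) * (‖lam + (κ:ℝ) • (ν + x - d • (w y) + c • u)‖:ℂ)^2
        + (d : ℂ) * (‖mu‖:ℂ)^2
        - 2 * ((inner ℝ (lam + (κ:ℝ) • (ν + x - d • (w y) + c • u)) (w mu) : ℝ) : ℂ))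
        + (κ:ℂ) * (c:ℂ) * (2 * (N:ℂ))))
      = (Real.pi : ℂ) * Complex.I / ((κ : ℂ) * (c : ℂ)) *
      ((a : ℂ) * (‖lam + (κ:ℝ) • (ν + x - d • (w y) + c • u)‖:ℂ)^2
        + (d : ℂ) * (‖mu‖:ℂ)^2
        - 2 * ((inner ℝ (lam + (κ:ℝ) • (ν + x - d • (w y) + c • u)) (w mu) : ℝ) : ℂ))
        + (N:ℂ) * (2 * (Real.pi:ℂ) * Complex.I) by field_simp]
  rw [Complex.exp_add, Complex.exp_int_mul_two_pi_mul_I, mul_one]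

end RootSystemData


namespace RootSystemData

variable {l : ℕ} (D : RootSystemData l)

/-- Congruence invariance of the phase in `ν` modulo `c·Y∨`. -/
lemma cong_phase {κ : ℕ} (hκ : 0 < κ) {a b c d : ℤ} (hc : c ≠ 0)
    (hdet : a * d - b * c = 1)
    {w : EucV l ≃ₗᵢ[ℝ] EucV l} (hw : w ∈ D.weyl)
    {lam mu ν u : EucV l}
    (hlam : lam ∈ D.weightLattice) (hmu : mu ∈ D.weightLattice)
    (hν : ν ∈ D.corootLattice) (hu : u ∈ D.corootLattice) :
    Qph a d c κ lam mu ν w = Qph a d c κ lam mu (ν + c • u) w := by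
  have h := D.core_phase hκ hc hdet hw (x := 0) (y := 0) hlam hmu
    (Submodule.zero_mem _) (Submodule.zero_mem _) hν hu
  simpa using h

/-- Shift of the phase. -/
lemma shift_phase {κ : ℕ} (hκ : 0 < κ) {a b c d : ℤ} (hc : c ≠ 0)
    (hdet : a * d - b * c = 1)
    {w : EucV l ≃ₗᵢ[ℝ] EucV l} (hw : w ∈ D.weyl)
    {lam mu x y ν : EucV l}
    (hlam : lam ∈ D.weightLattice) (hmu : mu ∈ D.weightLattice)
    (hx : x ∈ D.corootLattice) (hy : y ∈ D.corootLattice)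
    (hν : ν ∈ D.corootLattice) :
    Qph a d c κ (lam + (κ:ℝ) • x) (mu + (κ:ℝ) • y) ν w
      = Qph a d c κ lam mu (ν + (x - d • (w y))) w := by
  have h := D.core_phase hκ hc hdet hw (u := 0) hlam hmu hx hy hν
    (Submodule.zero_mem _)
  simpa [add_sub_assoc] using h

end RootSystemData


lemma merge_exp {l : ℕ} {a d c : ℤ} {κ : ℕ} (hκ : (κ:ℂ) ≠ 0) (hc : (c:ℂ) ≠ 0)
    (lam mu ν : EucV l) (w : EucV l ≃ₗᵢ[ℝ] EucV l) :
    Complex.exp ((Real.pi : ℂ) * Complex.I / (κ : ℂ) *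
        ((((d : ℝ)) / ((c : ℝ)) : ℝ) : ℂ) * ((‖mu‖ ^ 2 : ℝ) : ℂ)) *
      Complex.exp ((Real.pi : ℂ) * Complex.I / (κ : ℂ) *
        ((((a : ℝ)) / ((c : ℝ)) : ℝ) : ℂ) * ((‖lam + (κ : ℝ) • ν‖ ^ 2 : ℝ) : ℂ)) *
      Complex.exp (-(2 * (Real.pi : ℂ) * Complex.I) / ((κ : ℂ) * (c : ℂ)) *
        ((inner ℝ (lam + (κ : ℝ) • ν) (w mu) : ℝ) : ℂ))
    = Qph a d c κ lam mu ν w := by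
  rw [Qph, ← Complex.exp_add, ← Complex.exp_add]
  congr 1
  push_cast
  field_simp
  ring

set_option maxHeartbeats 4000000 in
/-- Lemma `lem:mRsymmetry` of Hansen–Takata.
The extension `E_U : X × X → ℂ` of the matrix entries of `ℛ(U)` (for
`U = [[a,b],[c,d]] ∈ SL(2,ℤ)` with `c ≠ 0`) is invariant under translation by
`κY∨` in each variable, transforms by `det(w)det(w')` under the Weyl group
acting on the two variables, and vanishes as soon as one of the two arguments
lies in `X ∩ H^κ`. -/
theorem statement7 {l : ℕ} (D : RootSystemData l) (θ : EucV l)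
    (hθ : D.IsHighestRoot θ) (κ : ℕ) (hκpos : 0 < κ)
    (bY : Fin l → EucV l)
    (hbY : Submodule.span ℤ (Set.range bY) = D.corootLattice)
    (U : Matrix.SpecialLinearGroup (Fin 2) ℤ) (hc : U.1 1 0 ≠ 0)
    (T : Finset (EucV l)) (hT : D.IsCorootReps (U.1 1 0) T)
    (E : EucV l → EucV l → ℂ)
    (hE : ∀ lam mu : EucV l, E lam mu =
      (Complex.I * ((Int.sign (U.1 1 0) : ℤ) : ℂ)) ^ D.Δplus.card /
          (((((κ : ℝ) * |((U.1 1 0 : ℤ) : ℝ)|) ^ ((l : ℝ) / 2) * latVol bY : ℝ)) : ℂ) *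
        Complex.exp (-(Real.pi : ℂ) * Complex.I / ((D.hv θ : ℝ) : ℂ) *
          ((PhiSL U : ℝ) : ℂ) * ((‖D.rho‖ ^ 2 : ℝ) : ℂ)) *
        Complex.exp ((Real.pi : ℂ) * Complex.I / (κ : ℂ) *
          ((((U.1 1 1 : ℤ) : ℝ) / ((U.1 1 0 : ℤ) : ℝ) : ℝ) : ℂ) *
          ((‖mu‖ ^ 2 : ℝ) : ℂ)) *
        ∑ ν ∈ T,
          Complex.exp ((Real.pi : ℂ) * Complex.I / (κ : ℂ) *
              ((((U.1 0 0 : ℤ) : ℝ) / ((U.1 1 0 : ℤ) : ℝ) : ℝ) : ℂ) *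
              ((‖lam + (κ : ℝ) • ν‖ ^ 2 : ℝ) : ℂ)) *
            ∑ᶠ w ∈ (D.weyl : Set (EucV l ≃ₗᵢ[ℝ] EucV l)),
              ((wdet w : ℝ) : ℂ) *
                Complex.exp (-(2 * (Real.pi : ℂ) * Complex.I) /
                    ((κ : ℂ) * ((U.1 1 0 : ℤ) : ℂ)) *
                  ((inner ℝ (lam + (κ : ℝ) • ν) (w mu) : ℝ) : ℂ))) :
    (∀ lam ∈ D.weightLattice, ∀ mu ∈ D.weightLattice,
        ∀ x ∈ D.corootLattice, ∀ y ∈ D.corootLattice,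
          E (lam + (κ : ℝ) • x) (mu + (κ : ℝ) • y) = E lam mu) ∧
      (∀ lam ∈ D.weightLattice, ∀ mu ∈ D.weightLattice,
        ∀ w ∈ D.weyl, ∀ w' ∈ D.weyl,
          E (w lam) (w' mu) = ((wdet w * wdet w' : ℝ) : ℂ) * E lam mu) ∧
      (∀ lam ∈ D.weightLattice, ∀ mu ∈ D.weightLattice,
        ((∃ α ∈ D.Δplus, ∃ k : ℤ, (inner ℝ lam α : ℝ) = (k : ℝ) * κ) ∨
            (∃ α ∈ D.Δplus, ∃ k : ℤ, (inner ℝ mu α : ℝ) = (k : ℝ) * κ)) →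
          E lam mu = 0) := by
  classical
  set a : ℤ := U.1 0 0 with ha
  set b : ℤ := U.1 0 1 with hb
  set c : ℤ := U.1 1 0 with hcdef
  set d : ℤ := U.1 1 1 with hd
  have hdet : a * d - b * c = 1 := by
    have h2 := U.2
    rw [Matrix.det_fin_two] at h2
    rw [← ha, ← hb, ← hcdef, ← hd] at h2
    exact h2
  have hκC : (κ : ℂ) ≠ 0 := Nat.cast_ne_zero.mpr hκpos.ne'
  have hcC : (c : ℂ) ≠ 0 := Int.cast_ne_zero.mpr hc
  have hWfin := D.weyl_finite
  set WF : Finset (EucV l ≃ₗᵢ[ℝ] EucV l) := hWfin.toFinset with hWF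
  have hmemWF : ∀ v, v ∈ WF ↔ v ∈ D.weyl := fun v => hWfin.mem_toFinset
  have hTY : ∀ t ∈ T, t ∈ D.corootLattice := hT.1
  have hfs : ∀ f : (EucV l ≃ₗᵢ[ℝ] EucV l) → ℂ,
      (∑ᶠ w ∈ (D.weyl : Set (EucV l ≃ₗᵢ[ℝ] EucV l)), f w) = ∑ w ∈ WF, f w := by
    intro f
    rw [← hWfin.coe_toFinset, finsum_mem_coe_finset]
  -- reindexing of sums over the Weyl group
  have hre : ∀ (σ τ : (EucV l ≃ₗᵢ[ℝ] EucV l) → (EucV l ≃ₗᵢ[ℝ] EucV l)),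
      (∀ v ∈ WF, σ v ∈ WF) → (∀ v ∈ WF, τ v ∈ WF) →
      (∀ v ∈ WF, τ (σ v) = v) → (∀ v ∈ WF, σ (τ v) = v) →
      ∀ f : (EucV l ≃ₗᵢ[ℝ] EucV l) → ℂ, ∑ v ∈ WF, f (σ v) = ∑ v ∈ WF, f v := by
    intro σ τ h1 h2 h3 h4 f
    exact Finset.sum_nbij' σ τ h1 h2 h3 h4 (fun v _ => rfl)
  -- normal form
  obtain ⟨C0, hNF⟩ : ∃ C0 : ℂ, ∀ lam mu : EucV l,
      E lam mu = C0 * ∑ ν ∈ T, ∑ w ∈ WF,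
        ((wdet w : ℝ) : ℂ) * Qph a d c κ lam mu ν w := by
    refine ⟨(Complex.I * ((Int.sign c : ℤ) : ℂ)) ^ D.Δplus.card /
          (((((κ : ℝ) * |(c : ℝ)|) ^ ((l : ℝ) / 2) * latVol bY : ℝ)) : ℂ) *
        Complex.exp (-(Real.pi : ℂ) * Complex.I / ((D.hv θ : ℝ) : ℂ) *
          ((PhiSL U : ℝ) : ℂ) * ((‖D.rho‖ ^ 2 : ℝ) : ℂ)), ?_⟩
    intro lam mu
    rw [hE lam mu]
    rw [mul_assoc]
    congr 1
    rw [Finset.mul_sum]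
    refine Finset.sum_congr rfl ?_
    intro ν hν
    rw [hfs]
    rw [Finset.mul_sum, Finset.mul_sum]
    refine Finset.sum_congr rfl ?_
    intro w hw
    rw [← merge_exp hκC hcC lam mu ν w]
    ring
  -- Part (1)
  have part1 : ∀ lam ∈ D.weightLattice, ∀ mu ∈ D.weightLattice,
      ∀ x ∈ D.corootLattice, ∀ y ∈ D.corootLattice,
        E (lam + (κ : ℝ) • x) (mu + (κ : ℝ) • y) = E lam mu := by
    intro lam hlam mu hmu x hx y hy
    rw [hNF, hNF]
    refine congrArg (fun t => C0 * t) ?_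
    rw [Finset.sum_comm]
    conv_rhs => rw [Finset.sum_comm]
    refine Finset.sum_congr rfl ?_
    intro w hwWF
    have hw : w ∈ D.weyl := (hmemWF w).1 hwWF
    have hwy : w y ∈ D.corootLattice := D.weyl_maps_corootLattice hw hy
    have hz : (x - d • (w y)) ∈ D.corootLattice :=
      Submodule.sub_mem _ hx (Submodule.smul_mem _ d hwy)
    have hstep : ∀ ν ∈ T,
        ((wdet w : ℝ) : ℂ) * Qph a d c κ (lam + (κ:ℝ) • x) (mu + (κ:ℝ) • y) ν w
        = ((wdet w : ℝ) : ℂ) * Qph a d c κ lam mu (ν + (x - d • (w y))) w := by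
      intro ν hν
      rw [D.shift_phase hκpos hc hdet hw hlam hmu hx hy (hTY ν hν)]
    rw [Finset.sum_congr rfl hstep]
    refine D.sum_reps_reindex hT (fun t => t + (x - d • (w y)))
      (fun t => t - (x - d • (w y))) ?_ ?_ ?_ ?_ ?_ ?_
      (fun t => ((wdet w : ℝ) : ℂ) * Qph a d c κ lam mu t w) ?_
    · intro v hv; exact Submodule.add_mem _ hv hz
    · intro v hv; exact Submodule.sub_mem _ hv hz
    · intro v hv; exact ⟨0, Submodule.zero_mem _, by simp⟩
    · intro v hv; exact ⟨0, Submodule.zero_mem _, by simp⟩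
    · intro v₁ h₁ v₂ h₂ h
      obtain ⟨u, hu, huv⟩ := h
      exact ⟨u, hu, by rw [show v₁ + (x - d • (w y)) - (v₂ + (x - d • (w y)))
        = v₁ - v₂ from by abel]; exact huv⟩
    · intro v₁ h₁ v₂ h₂ h
      obtain ⟨u, hu, huv⟩ := h
      exact ⟨u, hu, by rw [show v₁ - (x - d • (w y)) - (v₂ - (x - d • (w y)))
        = v₁ - v₂ from by abel]; exact huv⟩
    · intro v₁ h₁ v₂ h₂ h
      obtain ⟨u, hu, huv⟩ := h
      have hv12 : v₁ = v₂ + c • u := by rw [← huv]; abel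
      rw [hv12]
      exact congrArg _ (D.cong_phase hκpos hc hdet hw hlam hmu h₂ hu).symm
  -- Part (2)
  have part2 : ∀ lam ∈ D.weightLattice, ∀ mu ∈ D.weightLattice,
      ∀ w ∈ D.weyl, ∀ w' ∈ D.weyl,
        E (w lam) (w' mu) = ((wdet w * wdet w' : ℝ) : ℂ) * E lam mu := by
    intro lam hlam mu hmu w hw w' hw'
    have hwlamX : w lam ∈ D.weightLattice := D.weyl_maps_weight hw hlam
    have hinv_coe : ∀ (g : EucV l ≃ₗᵢ[ℝ] EucV l) (v : EucV l), (g⁻¹) v = g.symm v :=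
      fun g v => rfl
    rw [hNF, hNF]
    -- step 1: reindex the inner Weyl sums
    have hstep1 : ∀ ν ∈ T,
        (∑ w₀ ∈ WF, ((wdet w₀ : ℝ) : ℂ) * Qph a d c κ (w lam) (w' mu) ν w₀)
        = ((wdet w' : ℝ) : ℂ) *
            ∑ w₂ ∈ WF, ((wdet w₂ : ℝ) : ℂ) * Qph a d c κ (w lam) mu ν w₂ := by
      intro ν hν
      have hi : ∀ w₀ : EucV l ≃ₗᵢ[ℝ] EucV l,
          Qph a d c κ (w lam) (w' mu) ν w₀ = Qph a d c κ (w lam) mu ν (w₀ * w') := by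
        intro w₀
        simp only [Qph, LinearIsometryEquiv.coe_mul, Function.comp_apply,
          LinearIsometryEquiv.norm_map]
      calc (∑ w₀ ∈ WF, ((wdet w₀ : ℝ) : ℂ) * Qph a d c κ (w lam) (w' mu) ν w₀)
          = ∑ w₀ ∈ WF, ((wdet w₀ : ℝ) : ℂ) * Qph a d c κ (w lam) mu ν (w₀ * w') := by
            refine Finset.sum_congr rfl fun w₀ _ => by rw [hi]
        _ = ∑ w₂ ∈ WF, (fun w₀ => ((wdet w₀ : ℝ) : ℂ) *
              Qph a d c κ (w lam) mu ν (w₀ * w')) (w₂ * w'⁻¹) := by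
            refine (hre (fun v => v * w'⁻¹) (fun v => v * w') ?_ ?_ ?_ ?_ _).symm
            · intro v hv
              exact (hmemWF _).2 (mul_mem ((hmemWF v).1 hv) (inv_mem hw'))
            · intro v hv
              exact (hmemWF _).2 (mul_mem ((hmemWF v).1 hv) hw')
            · intro v _; group
            · intro v _; group
        _ = ∑ w₂ ∈ WF, ((wdet w' : ℝ) : ℂ) *
              (((wdet w₂ : ℝ) : ℂ) * Qph a d c κ (w lam) mu ν w₂) := by
            refine Finset.sum_congr rfl fun w₂ _ => ?_
            simp only
            rw [inv_mul_cancel_right, wdet_mul, D.weyl_wdet_inv hw']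
            push_cast
            ring
        _ = ((wdet w' : ℝ) : ℂ) *
              ∑ w₂ ∈ WF, ((wdet w₂ : ℝ) : ℂ) * Qph a d c κ (w lam) mu ν w₂ := by
            rw [Finset.mul_sum]
    -- step 2: reindex the T-sum by w, and the Weyl sum by left multiplication
    have hiv : ∀ (ν : EucV l) (w₂ : EucV l ≃ₗᵢ[ℝ] EucV l),
        Qph a d c κ (w lam) mu (w ν) w₂ = Qph a d c κ lam mu ν (w⁻¹ * w₂) := by
      intro ν w₂
      have hvec : w lam + (κ:ℝ) • (w ν) = w (lam + (κ:ℝ) • ν) := by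
        rw [map_add, map_smul]
      simp only [Qph, hvec, LinearIsometryEquiv.norm_map, LinearIsometryEquiv.coe_mul,
        Function.comp_apply, hinv_coe]
      rw [show (inner ℝ (w (lam + (κ:ℝ) • ν)) (w₂ mu) : ℝ)
          = (inner ℝ (lam + (κ:ℝ) • ν) (w.symm (w₂ mu)) : ℝ) from by
        conv_lhs => rw [← w.apply_symm_apply (w₂ mu)]
        rw [LinearIsometryEquiv.inner_map_map]]
    have hstep3 : ∀ ν : EucV l,
        (∑ w₂ ∈ WF, ((wdet w₂ : ℝ) : ℂ) * Qph a d c κ (w lam) mu (w ν) w₂)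
        = ((wdet w : ℝ) : ℂ) *
            ∑ w₁ ∈ WF, ((wdet w₁ : ℝ) : ℂ) * Qph a d c κ lam mu ν w₁ := by
      intro ν
      calc (∑ w₂ ∈ WF, ((wdet w₂ : ℝ) : ℂ) * Qph a d c κ (w lam) mu (w ν) w₂)
          = ∑ w₂ ∈ WF, ((wdet w₂ : ℝ) : ℂ) * Qph a d c κ lam mu ν (w⁻¹ * w₂) := by
            refine Finset.sum_congr rfl fun w₂ _ => by rw [hiv]
        _ = ∑ w₁ ∈ WF, (fun w₂ => ((wdet w₂ : ℝ) : ℂ) *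
              Qph a d c κ lam mu ν (w⁻¹ * w₂)) (w * w₁) := by
            refine (hre (fun v => w * v) (fun v => w⁻¹ * v) ?_ ?_ ?_ ?_ _).symm
            · intro v hv
              exact (hmemWF _).2 (mul_mem hw ((hmemWF v).1 hv))
            · intro v hv
              exact (hmemWF _).2 (mul_mem (inv_mem hw) ((hmemWF v).1 hv))
            · intro v _; group
            · intro v _; group
        _ = ∑ w₁ ∈ WF, ((wdet w : ℝ) : ℂ) *
              (((wdet w₁ : ℝ) : ℂ) * Qph a d c κ lam mu ν w₁) := by
            refine Finset.sum_congr rfl fun w₁ _ => ?_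
            simp only
            rw [inv_mul_cancel_left, wdet_mul]
            push_cast
            ring
        _ = ((wdet w : ℝ) : ℂ) *
              ∑ w₁ ∈ WF, ((wdet w₁ : ℝ) : ℂ) * Qph a d c κ lam mu ν w₁ := by
            rw [Finset.mul_sum]
    have hG : (∑ ν ∈ T, ∑ w₂ ∈ WF, ((wdet w₂ : ℝ) : ℂ) * Qph a d c κ (w lam) mu ν w₂)
        = ∑ ν ∈ T, (fun t => ∑ w₂ ∈ WF, ((wdet w₂ : ℝ) : ℂ) *
            Qph a d c κ (w lam) mu t w₂) (w ν) := by
      refine (D.sum_reps_reindex hT (fun t => w t) (fun t => w.symm t) ?_ ?_ ?_ ?_ ?_ ?_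
        _ ?_).symm
      · intro v hv; exact D.weyl_maps_corootLattice hw hv
      · intro v hv
        have := (D.weyl_maps_corootLattice' hw).2 v hv
        rw [hinv_coe] at this
        exact this
      · intro v hv; exact ⟨0, Submodule.zero_mem _, by simp⟩
      · intro v hv; exact ⟨0, Submodule.zero_mem _, by simp⟩
      · intro v₁ h₁ v₂ h₂ h
        obtain ⟨u, hu, huv⟩ := h
        refine ⟨w u, D.weyl_maps_corootLattice hw hu, ?_⟩
        rw [← map_sub, huv, map_zsmul]
      · intro v₁ h₁ v₂ h₂ h
        obtain ⟨u, hu, huv⟩ := h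
        refine ⟨w.symm u, ?_, ?_⟩
        · have := (D.weyl_maps_corootLattice' hw).2 u hu
          rw [hinv_coe] at this
          exact this
        · rw [← map_sub, huv, map_zsmul]
      · intro v₁ h₁ v₂ h₂ h
        obtain ⟨u, hu, huv⟩ := h
        have hv12 : v₁ = v₂ + c • u := by rw [← huv]; abel
        subst hv12
        refine Finset.sum_congr rfl fun w₂ hw₂ => ?_
        exact congrArg _ (D.cong_phase hκpos hc hdet ((hmemWF w₂).1 hw₂)
          hwlamX hmu h₂ hu).symm
    calc C0 * ∑ ν ∈ T, ∑ w₀ ∈ WF, ((wdet w₀ : ℝ) : ℂ) *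
            Qph a d c κ (w lam) (w' mu) ν w₀
        = C0 * ∑ ν ∈ T, ((wdet w' : ℝ) : ℂ) *
            ∑ w₂ ∈ WF, ((wdet w₂ : ℝ) : ℂ) * Qph a d c κ (w lam) mu ν w₂ := by
          rw [Finset.sum_congr rfl hstep1]
      _ = C0 * (((wdet w' : ℝ) : ℂ) *
            ∑ ν ∈ T, ∑ w₂ ∈ WF, ((wdet w₂ : ℝ) : ℂ) * Qph a d c κ (w lam) mu ν w₂) := by
          rw [← Finset.mul_sum]
      _ = C0 * (((wdet w' : ℝ) : ℂ) * ∑ ν ∈ T,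
            (((wdet w : ℝ) : ℂ) * ∑ w₁ ∈ WF, ((wdet w₁ : ℝ) : ℂ) *
              Qph a d c κ lam mu ν w₁)) := by
          rw [hG]
          congr 2
          exact Finset.sum_congr rfl fun ν _ => hstep3 ν
      _ = ((wdet w * wdet w' : ℝ) : ℂ) * (C0 * ∑ ν ∈ T, ∑ w₁ ∈ WF,
            ((wdet w₁ : ℝ) : ℂ) * Qph a d c κ lam mu ν w₁) := by
          rw [← Finset.mul_sum]
          push_cast
          ring
  -- Part (3)
  have part3 : ∀ lam ∈ D.weightLattice, ∀ mu ∈ D.weightLattice,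
      ((∃ α ∈ D.Δplus, ∃ k : ℤ, (inner ℝ lam α : ℝ) = (k : ℝ) * κ) ∨
          (∃ α ∈ D.Δplus, ∃ k : ℤ, (inner ℝ mu α : ℝ) = (k : ℝ) * κ)) →
        E lam mu = 0 := by
    have key : ∀ lam ∈ D.weightLattice, ∀ mu ∈ D.weightLattice,
        ∀ α ∈ D.Δplus, ∀ k : ℤ, (inner ℝ lam α : ℝ) = (k : ℝ) * κ →
          E lam mu = 0 := by
      intro lam hlam mu hmu α hαp k hk
      have hαΔ : α ∈ D.Δ := (Finset.mem_filter.1 hαp).1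
      have hα0 : α ≠ 0 := D.root_ne_zero hαΔ
      have hA := inner_self_ne_zero' hα0
      have hsw : rootReflection α ∈ D.weyl :=
        Subgroup.subset_closure ⟨α, hαΔ, rfl⟩
      have hxY : ((-k) • RootSystemData.coroot α) ∈ D.corootLattice :=
        Submodule.smul_mem _ (-k) (Submodule.subset_span ⟨α, hαΔ, rfl⟩)
      have hvec : rootReflection α lam = lam + (κ:ℝ) • ((-k) • RootSystemData.coroot α) := by
        rw [rootReflection_apply' hα0]
        have hinner : (inner ℝ α lam : ℝ) = (k : ℝ) * κ := by
          rw [real_inner_comm]; exact hk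
        rw [hinner, ← Int.cast_smul_eq_zsmul ℝ, RootSystemData.coroot]
        match_scalars
        push_cast
        field_simp
        ring
      have h1 : E (lam + (κ:ℝ) • ((-k) • RootSystemData.coroot α)) (mu + (κ:ℝ) • (0 : EucV l))
          = E lam mu := part1 lam hlam mu hmu _ hxY 0 (Submodule.zero_mem _)
      rw [smul_zero, add_zero] at h1
      have h2 : E (rootReflection α lam) ((1 : EucV l ≃ₗᵢ[ℝ] EucV l) mu)
          = ((wdet (rootReflection α) * wdet (1 : EucV l ≃ₗᵢ[ℝ] EucV l) : ℝ) : ℂ) *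
            E lam mu := part2 lam hlam mu hmu _ hsw 1 (one_mem _)
      rw [wdet_rootReflection hα0, wdet_one] at h2
      have hone : (1 : EucV l ≃ₗᵢ[ℝ] EucV l) mu = mu := rfl
      rw [hone, hvec, h1] at h2
      push_cast at h2
      linear_combination (1/2 : ℂ) * h2
    intro lam hlam mu hmu h
    rcases h with ⟨α, hαp, k, hk⟩ | ⟨α, hαp, k, hk⟩
    · exact key lam hlam mu hmu α hαp k hk
    · -- use the symmetry in the second variable
      have hαΔ : α ∈ D.Δ := (Finset.mem_filter.1 hαp).1
      have hα0 : α ≠ 0 := D.root_ne_zero hαΔ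
      have hsw : rootReflection α ∈ D.weyl :=
        Subgroup.subset_closure ⟨α, hαΔ, rfl⟩
      have hxY : ((-k) • RootSystemData.coroot α) ∈ D.corootLattice :=
        Submodule.smul_mem _ (-k) (Submodule.subset_span ⟨α, hαΔ, rfl⟩)
      have hvec : rootReflection α mu = mu + (κ:ℝ) • ((-k) • RootSystemData.coroot α) := by
        rw [rootReflection_apply' hα0]
        have hinner : (inner ℝ α mu : ℝ) = (k : ℝ) * κ := by
          rw [real_inner_comm]; exact hk
        rw [hinner, ← Int.cast_smul_eq_zsmul ℝ, RootSystemData.coroot]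
        match_scalars
        push_cast
        field_simp
        ring
      have h1 : E (lam + (κ:ℝ) • (0 : EucV l)) (mu + (κ:ℝ) • ((-k) • RootSystemData.coroot α))
          = E lam mu := part1 lam hlam mu hmu 0 (Submodule.zero_mem _) _ hxY
      rw [smul_zero, add_zero] at h1
      have h2 : E ((1 : EucV l ≃ₗᵢ[ℝ] EucV l) lam) (rootReflection α mu)
          = ((wdet (1 : EucV l ≃ₗᵢ[ℝ] EucV l) * wdet (rootReflection α) : ℝ) : ℂ) *
            E lam mu := part2 lam hlam mu hmu 1 (one_mem _) _ hsw
      rw [wdet_rootReflection hα0, wdet_one] at h2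
      have hone : (1 : EucV l ≃ₗᵢ[ℝ] EucV l) lam = lam := rfl
      rw [hone, hvec, h1] at h2
      push_cast at h2
      linear_combination (1/2 : ℂ) * h2
  exact ⟨part1, part2, part3⟩
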